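/- Let A, A' ∈ ℍ, let N be a positive integer, and let z, v ∈ ℂ be such that every factor below is nonzero. For λ', λ'' ∈ ℤ write u(λ',λ'') = Aλ' + A'λ'' + v, and consider the quotient R(λ',λ'') = (1 − e^{2πi(u(λ',λ'')−z)})^N (1 − e^{2πiN·u(λ',λ'')}) / [ (1 − e^{2πi·u(λ',λ'')})^N (1 − e^{2πiN(u(λ',λ'')−z)}) ]. Then the products Q₊₊ = ∏_{λ'≥1, λ''≥1} R(λ',λ'') and Q₋₋ = ∏_{λ'≤0, λ''≤0} R(λ',λ'') converge absolutely (in the sense that ∑ |R(λ',λ'') − 1| < ∞ over each index set), and Q₊₊ / Q₋₋ = [ Γ(z−v, A, A')^N / Γ(−v, A, A')^N ] · [ Γ(−Nv, NA, NA') / Γ(Nz−Nv, NA, NA') ]. -/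

import Mathlib

/-!
Shifting the lattice point by `(1, 1)` turns each factor of `R(λ', λ'')` with `λ', λ'' ≥ 1` into
a numerator factor of one of the four elliptic gamma functions, and the reflection
`1 - e(x) = -e(x) (1 - e(-x))`, whose prefactors cancel in `R`, turns each factor with
`λ', λ'' ≤ 0` into a denominator factor. All these factors differ from `1` by `e(jτ + kσ + w)`,
which decays geometrically in `j, k`, and absolute convergence is preserved under products,
powers and quotients.
-/

noncomputable section

open Complex

/-- `e2 w = e^{2πi w}`. -/
def e2 (w : ℂ) : ℂ := Complex.exp (2 * (Real.pi : ℂ) * Complex.I * w)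

/-- The elliptic gamma function
`Γ(z,τ,σ) = ∏_{j,k ≥ 0} (1 − e^{2πi((j+1)τ+(k+1)σ−z)}) / (1 − e^{2πi(jτ+kσ+z)})`. -/
def ellGamma (z τ σ : ℂ) : ℂ :=
  (∏' p : ℕ × ℕ, (1 - e2 (((p.1 : ℂ) + 1) * τ + ((p.2 : ℂ) + 1) * σ - z))) /
    (∏' p : ℕ × ℕ, (1 - e2 ((p.1 : ℂ) * τ + (p.2 : ℂ) * σ + z)))

/-- Eisenstein's smoothed factor
`R(λ',λ'') = (1−e(u−z))^N (1−e(Nu)) / ((1−e(u))^N (1−e(N(u−z))))` with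
`u = Aλ' + A'λ'' + v`. -/
def eisR (A A' : ℂ) (N : ℕ) (z v : ℂ) (p : ℤ × ℤ) : ℂ :=
  (1 - e2 ((A * p.1 + A' * p.2 + v) - z)) ^ N * (1 - e2 ((N : ℂ) * (A * p.1 + A' * p.2 + v))) /
    ((1 - e2 (A * p.1 + A' * p.2 + v)) ^ N *
      (1 - e2 ((N : ℂ) * ((A * p.1 + A' * p.2 + v) - z))))

section DeviationFromOne

variable {ι : Type*}

theorem Summable.norm_mul_sub_one {R : Type*} [NormedRing R] {f g : ι → R}
    (hf : Summable fun i => ‖f i - 1‖) (hg : Summable fun i => ‖g i - 1‖) :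
    Summable fun i => ‖f i * g i - 1‖ := by
  refine ((hf.mul_left 2).add hg).of_norm_bounded_eventually ?_
  filter_upwards [hg.tendsto_cofinite_zero.eventually (ge_mem_nhds one_pos)] with i hi
  have hfg : f i * g i - 1 = (f i - 1) * (g i - 1) + (f i - 1) + (g i - 1) := by noncomm_ring
  have hprod : ‖(f i - 1) * (g i - 1)‖ ≤ ‖f i - 1‖ :=
    (norm_mul_le _ _).trans (mul_le_of_le_one_right (norm_nonneg _) hi)
  rw [norm_norm, hfg]
  linarith [norm_add₃_le (a := (f i - 1) * (g i - 1)) (b := f i - 1) (c := g i - 1)]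

theorem Summable.norm_pow_sub_one {R : Type*} [NormedRing R] {f : ι → R}
    (hf : Summable fun i => ‖f i - 1‖) (n : ℕ) : Summable fun i => ‖f i ^ n - 1‖ := by
  induction n with
  | zero => simp
  | succ n ih => simpa only [pow_succ] using ih.norm_mul_sub_one hf

theorem Summable.norm_inv_sub_one {K : Type*} [NormedDivisionRing K] {f : ι → K}
    (hf : Summable fun i => ‖f i - 1‖) : Summable fun i => ‖(f i)⁻¹ - 1‖ := by
  refine (hf.mul_left 2).of_norm_bounded_eventually ?_
  filter_upwards [hf.tendsto_cofinite_zero.eventually (ge_mem_nhds one_half_pos)] with i hi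
  have hfi : 1 / 2 ≤ ‖f i‖ := by
    linarith [norm_sub_norm_le (1 : K) (f i), norm_sub_rev (1 : K) (f i), norm_one (α := K)]
  have hf0 : f i ≠ 0 := norm_pos_iff.1 (by linarith)
  rw [norm_norm, show (f i)⁻¹ - 1 = (1 - f i) * (f i)⁻¹ by rw [sub_mul, one_mul,
    mul_inv_cancel₀ hf0], norm_mul, norm_inv, norm_sub_rev, ← div_eq_mul_inv,
    div_le_iff₀ (by linarith)]
  nlinarith [norm_nonneg (f i - 1)]

theorem Summable.norm_div_sub_one {K : Type*} [NormedDivisionRing K] {f g : ι → K}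
    (hf : Summable fun i => ‖f i - 1‖) (hg : Summable fun i => ‖g i - 1‖) :
    Summable fun i => ‖f i / g i - 1‖ := by
  simpa only [div_eq_mul_inv] using hf.norm_mul_sub_one hg.norm_inv_sub_one

theorem Summable.multipliable_of_norm_sub_one {R : Type*} [NormedCommRing R] [NormOneClass R]
    [CompleteSpace R] {f : ι → R} (hf : Summable fun i => ‖f i - 1‖) : Multipliable f := by
  simpa using multipliable_one_add_of_summable hf

theorem tprod_ne_zero_of_summable_norm_sub_one {R : Type*} [NormedCommRing R] [NormOneClass R]
    [CompleteSpace R] [NormMulClass R] {f : ι → R} (h0 : ∀ i, f i ≠ 0)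
    (hf : Summable fun i => ‖f i - 1‖) : ∏' i, f i ≠ 0 := by
  simpa using tprod_one_add_ne_zero_of_summable (f := fun i => f i - 1) (by simpa using h0) hf

theorem summable_norm_sub_one_and_hasProd_div {K : Type*} [NormedField K] [CompleteSpace K]
    {f g h k : ι → K} (N : ℕ) (hf : Summable fun i => ‖f i - 1‖)
    (hg : Summable fun i => ‖g i - 1‖) (hh : Summable fun i => ‖h i - 1‖)
    (hk : Summable fun i => ‖k i - 1‖) (h0 : ∀ i, h i ≠ 0) (k0 : ∀ i, k i ≠ 0) :
    Summable (fun i => ‖f i ^ N * g i / (h i ^ N * k i) - 1‖) ∧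
      HasProd (fun i => f i ^ N * g i / (h i ^ N * k i))
        ((∏' i, f i) ^ N * (∏' i, g i) / ((∏' i, h i) ^ N * ∏' i, k i)) :=
  ⟨((hf.norm_pow_sub_one N).norm_mul_sub_one hg).norm_div_sub_one
      ((hh.norm_pow_sub_one N).norm_mul_sub_one hk),
    ((hf.multipliable_of_norm_sub_one.hasProd.pow N).mul
      hg.multipliable_of_norm_sub_one.hasProd).div₀
      ((hh.multipliable_of_norm_sub_one.hasProd.pow N).mul hk.multipliable_of_norm_sub_one.hasProd)
      (mul_ne_zero (pow_ne_zero N (tprod_ne_zero_of_summable_norm_sub_one h0 hh))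
        (tprod_ne_zero_of_summable_norm_sub_one k0 hk))⟩

end DeviationFromOne

theorem e2_add (a b : ℂ) : e2 (a + b) = e2 a * e2 b := by
  simp only [e2, ← Complex.exp_add, mul_add]

theorem e2_natCast_mul (n : ℕ) (x : ℂ) : e2 (n * x) = e2 x ^ n := by
  rw [e2, e2, ← Complex.exp_nat_mul]
  congr 1
  ring

theorem norm_e2 (w : ℂ) : ‖e2 w‖ = Real.exp (-(2 * Real.pi * w.im)) := by
  simp [e2, Complex.norm_exp, Complex.mul_re, Complex.mul_im]

theorem norm_e2_lt_one {τ : ℂ} (hτ : 0 < τ.im) : ‖e2 τ‖ < 1 := by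
  rw [norm_e2, Real.exp_lt_one_iff]
  nlinarith [Real.pi_pos]

theorem one_sub_e2_eq_neg_mul {x y : ℂ} (hxy : x + y = 0) : 1 - e2 x = -e2 x * (1 - e2 y) := by
  have h : e2 x * e2 y = 1 := by rw [← e2_add, hxy]; simp [e2]
  linear_combination -h

theorem summable_norm_e2_lattice {τ σ : ℂ} (hτ : 0 < τ.im) (hσ : 0 < σ.im) (w : ℂ) :
    Summable fun p : ℕ × ℕ => ‖e2 (p.1 * τ + p.2 * σ + w)‖ := by
  have hgeom := (summable_geometric_of_lt_one (norm_nonneg _) (norm_e2_lt_one hτ)).mul_of_nonneg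
    ((summable_geometric_of_lt_one (norm_nonneg _) (norm_e2_lt_one hσ)).mul_right ‖e2 w‖)
    (fun _ => by positivity) (fun _ => by positivity)
  refine hgeom.congr fun p => ?_
  simp only [e2_add, e2_natCast_mul, norm_mul, norm_pow, mul_assoc]

theorem im_natCast_mul_pos {N : ℕ} (hN : 0 < N) {τ : ℂ} (hτ : 0 < τ.im) :
    0 < ((N : ℂ) * τ).im := by
  simpa using mul_pos (Nat.cast_pos.2 hN) hτ

def ellGammaNumFactor (z τ σ : ℂ) (p : ℕ × ℕ) : ℂ :=
  1 - e2 (((p.1 : ℂ) + 1) * τ + ((p.2 : ℂ) + 1) * σ - z)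

def ellGammaDenFactor (z τ σ : ℂ) (p : ℕ × ℕ) : ℂ :=
  1 - e2 ((p.1 : ℂ) * τ + (p.2 : ℂ) * σ + z)

theorem ellGamma_eq_div (z τ σ : ℂ) :
    ellGamma z τ σ = (∏' p, ellGammaNumFactor z τ σ p) / ∏' p, ellGammaDenFactor z τ σ p :=
  rfl

theorem summable_norm_ellGammaDenFactor_sub_one {τ σ : ℂ} (hτ : 0 < τ.im) (hσ : 0 < σ.im)
    (z : ℂ) : Summable fun p => ‖ellGammaDenFactor z τ σ p - 1‖ := by
  simpa [ellGammaDenFactor] using summable_norm_e2_lattice hτ hσ z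

theorem ellGammaNumFactor_eq (z τ σ : ℂ) :
    ellGammaNumFactor z τ σ = ellGammaDenFactor (τ + σ - z) τ σ := by
  ext p
  rw [ellGammaNumFactor, ellGammaDenFactor]
  congr 2
  ring

theorem summable_norm_ellGammaNumFactor_sub_one {τ σ : ℂ} (hτ : 0 < τ.im) (hσ : 0 < σ.im)
    (z : ℂ) : Summable fun p => ‖ellGammaNumFactor z τ σ p - 1‖ := by
  simpa only [ellGammaNumFactor_eq] using summable_norm_ellGammaDenFactor_sub_one hτ hσ _

def eisFactor (N : ℕ) (z u : ℂ) : ℂ :=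
  (1 - e2 (u - z)) ^ N * (1 - e2 (N * u)) / ((1 - e2 u) ^ N * (1 - e2 (N * (u - z))))

theorem eisR_eq_eisFactor (A A' : ℂ) (N : ℕ) (z v : ℂ) (p : ℤ × ℤ) :
    eisR A A' N z v p = eisFactor N z (A * p.1 + A' * p.2 + v) :=
  rfl

theorem eisFactor_neg_neg (N : ℕ) (z u : ℂ) : eisFactor N (-z) (-u) = eisFactor N z u := by
  have hc : (-e2 (u - z)) ^ N * -e2 (N * u) = (-e2 u) ^ N * -e2 (N * (u - z)) := by
    rw [neg_pow (e2 (u - z)), neg_pow (e2 u), ← e2_natCast_mul, ← e2_natCast_mul]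
    ring
  have hc0 : (-e2 u) ^ N * -e2 (N * (u - z)) ≠ 0 := by simp [e2]
  rw [eisFactor, eisFactor, one_sub_e2_eq_neg_mul (x := u - z) (y := -u - -z) (by ring),
    one_sub_e2_eq_neg_mul (x := N * u) (y := N * -u) (by ring),
    one_sub_e2_eq_neg_mul (x := u) (y := -u) (by ring),
    one_sub_e2_eq_neg_mul (x := N * (u - z)) (y := N * (-u - -z)) (by ring),
    mul_pow, mul_pow, mul_mul_mul_comm, mul_mul_mul_comm ((-e2 u) ^ N), hc,
    mul_div_mul_left _ _ hc0]

def natProdEquivPosQuadrant : ℕ × ℕ ≃ {p : ℤ × ℤ // 1 ≤ p.1 ∧ 1 ≤ p.2} where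
  toFun q := ⟨(q.1 + 1, q.2 + 1), by omega, by omega⟩
  invFun p := ((p.1.1 - 1).toNat, (p.1.2 - 1).toNat)
  left_inv q := by simp
  right_inv := fun ⟨⟨a, b⟩, ha, hb⟩ => by ext <;> simp <;> omega

def natProdEquivNonposQuadrant : ℕ × ℕ ≃ {p : ℤ × ℤ // p.1 ≤ 0 ∧ p.2 ≤ 0} where
  toFun q := ⟨(-q.1, -q.2), by omega, by omega⟩
  invFun p := ((-p.1.1).toNat, (-p.1.2).toNat)
  left_inv q := by simp
  right_inv := fun ⟨⟨a, b⟩, ha, hb⟩ => by ext <;> simp <;> omega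

theorem eisR_natCast_add_one (A A' : ℂ) (N : ℕ) (z v : ℂ) (q : ℕ × ℕ) :
    eisR A A' N z v ((q.1 : ℤ) + 1, (q.2 : ℤ) + 1) =
      ellGammaNumFactor (z - v) A A' q ^ N *
          ellGammaNumFactor (-(N * v)) (N * A) (N * A') q /
        (ellGammaNumFactor (-v) A A' q ^ N *
          ellGammaNumFactor (N * z - N * v) (N * A) (N * A') q) := by
  rw [eisR_eq_eisFactor, eisFactor]
  simp only [ellGammaNumFactor]
  congr 5
  all_goals push_cast; ring

theorem eisR_neg_natCast (A A' : ℂ) (N : ℕ) (z v : ℂ) (q : ℕ × ℕ) :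
    eisR A A' N z v (-(q.1 : ℤ), -(q.2 : ℤ)) =
      ellGammaDenFactor (z - v) A A' q ^ N *
          ellGammaDenFactor (-(N * v)) (N * A) (N * A') q /
        (ellGammaDenFactor (-v) A A' q ^ N *
          ellGammaDenFactor (N * z - N * v) (N * A) (N * A') q) := by
  rw [eisR_eq_eisFactor, ← eisFactor_neg_neg, eisFactor]
  simp only [ellGammaDenFactor]
  congr 5
  all_goals push_cast; ring

theorem summable_and_tprod_eisR_posQuadrant {A A' : ℂ} (hA : 0 < A.im) (hA' : 0 < A'.im)
    {N : ℕ} (hN : 0 < N) (z v : ℂ) (h₁ : ∀ q, ellGammaNumFactor (-v) A A' q ≠ 0)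
    (h₂ : ∀ q, ellGammaNumFactor (N * z - N * v) (N * A) (N * A') q ≠ 0) :
    Summable (fun p : {p : ℤ × ℤ // 1 ≤ p.1 ∧ 1 ≤ p.2} => ‖eisR A A' N z v p.1 - 1‖) ∧
      ∏' p : {p : ℤ × ℤ // 1 ≤ p.1 ∧ 1 ≤ p.2}, eisR A A' N z v p.1 =
        ((∏' q, ellGammaNumFactor (z - v) A A' q) ^ N *
            (∏' q, ellGammaNumFactor (-(N * v)) (N * A) (N * A') q) /
          ((∏' q, ellGammaNumFactor (-v) A A' q) ^ N *
            ∏' q, ellGammaNumFactor (N * z - N * v) (N * A) (N * A') q)) := by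
  have hNA := im_natCast_mul_pos hN hA
  have hNA' := im_natCast_mul_pos hN hA'
  rw [← natProdEquivPosQuadrant.summable_iff, ← natProdEquivPosQuadrant.tprod_eq]
  obtain ⟨hsum, hprod⟩ := summable_norm_sub_one_and_hasProd_div N
    (summable_norm_ellGammaNumFactor_sub_one hA hA' _)
    (summable_norm_ellGammaNumFactor_sub_one hNA hNA' _)
    (summable_norm_ellGammaNumFactor_sub_one hA hA' _)
    (summable_norm_ellGammaNumFactor_sub_one hNA hNA' _) h₁ h₂
  simp only [Function.comp_def, natProdEquivPosQuadrant, Equiv.coe_fn_mk, eisR_natCast_add_one]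
  exact ⟨hsum, hprod.tprod_eq⟩

theorem summable_and_tprod_eisR_nonposQuadrant {A A' : ℂ} (hA : 0 < A.im) (hA' : 0 < A'.im)
    {N : ℕ} (hN : 0 < N) (z v : ℂ) (h₁ : ∀ q, ellGammaDenFactor (-v) A A' q ≠ 0)
    (h₂ : ∀ q, ellGammaDenFactor (N * z - N * v) (N * A) (N * A') q ≠ 0) :
    Summable (fun p : {p : ℤ × ℤ // p.1 ≤ 0 ∧ p.2 ≤ 0} => ‖eisR A A' N z v p.1 - 1‖) ∧
      ∏' p : {p : ℤ × ℤ // p.1 ≤ 0 ∧ p.2 ≤ 0}, eisR A A' N z v p.1 =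
        ((∏' q, ellGammaDenFactor (z - v) A A' q) ^ N *
            (∏' q, ellGammaDenFactor (-(N * v)) (N * A) (N * A') q) /
          ((∏' q, ellGammaDenFactor (-v) A A' q) ^ N *
            ∏' q, ellGammaDenFactor (N * z - N * v) (N * A) (N * A') q)) := by
  have hNA := im_natCast_mul_pos hN hA
  have hNA' := im_natCast_mul_pos hN hA'
  rw [← natProdEquivNonposQuadrant.summable_iff, ← natProdEquivNonposQuadrant.tprod_eq]
  obtain ⟨hsum, hprod⟩ := summable_norm_sub_one_and_hasProd_div N
    (summable_norm_ellGammaDenFactor_sub_one hA hA' _)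
    (summable_norm_ellGammaDenFactor_sub_one hNA hNA' _)
    (summable_norm_ellGammaDenFactor_sub_one hA hA' _)
    (summable_norm_ellGammaDenFactor_sub_one hNA hNA' _) h₁ h₂
  simp only [Function.comp_def, natProdEquivNonposQuadrant, Equiv.coe_fn_mk, eisR_neg_natCast]
  exact ⟨hsum, hprod.tprod_eq⟩

theorem eisenstein_quotient_of_quotients_general (A A' : ℂ) (hA : 0 < A.im) (hA' : 0 < A'.im)
    (N : ℕ) (hN : 0 < N) (z v : ℂ)
    (hΓ : ∀ j k : ℕ, ∀ w ∈ ({z - v, -v, (N : ℂ) * z - (N : ℂ) * v, -((N : ℂ) * v)} : Set ℂ),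
      ∀ T ∈ ({(A, A'), ((N : ℂ) * A, (N : ℂ) * A')} : Set (ℂ × ℂ)),
      (1 - e2 ((j : ℂ) * T.1 + (k : ℂ) * T.2 + w)) ≠ 0 ∧
      (1 - e2 (((j : ℂ) + 1) * T.1 + ((k : ℂ) + 1) * T.2 - w)) ≠ 0) :
    Summable (fun p : {p : ℤ × ℤ // 1 ≤ p.1 ∧ 1 ≤ p.2} =>
      ‖eisR A A' N z v p.1 - 1‖) ∧
    Summable (fun p : {p : ℤ × ℤ // p.1 ≤ 0 ∧ p.2 ≤ 0} =>
      ‖eisR A A' N z v p.1 - 1‖) ∧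
    (∏' p : {p : ℤ × ℤ // 1 ≤ p.1 ∧ 1 ≤ p.2}, eisR A A' N z v p.1) /
        (∏' p : {p : ℤ × ℤ // p.1 ≤ 0 ∧ p.2 ≤ 0}, eisR A A' N z v p.1) =
      (ellGamma (z - v) A A' ^ N / ellGamma (-v) A A' ^ N) *
        (ellGamma (-((N : ℂ) * v)) ((N : ℂ) * A) ((N : ℂ) * A') /
          ellGamma ((N : ℂ) * z - (N : ℂ) * v) ((N : ℂ) * A) ((N : ℂ) * A')) := by
  have hnum : ∀ q, ellGammaNumFactor (-v) A A' q ≠ 0 :=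
    fun q => (hΓ q.1 q.2 (-v) (by simp) (A, A') (by simp)).2
  have hden : ∀ q, ellGammaDenFactor (-v) A A' q ≠ 0 :=
    fun q => (hΓ q.1 q.2 (-v) (by simp) (A, A') (by simp)).1
  have hNnum : ∀ q, ellGammaNumFactor (N * z - N * v) (N * A) (N * A') q ≠ 0 :=
    fun q => (hΓ q.1 q.2 _ (by simp) (N * A, N * A') (by simp)).2
  have hNden : ∀ q, ellGammaDenFactor (N * z - N * v) (N * A) (N * A') q ≠ 0 :=
    fun q => (hΓ q.1 q.2 _ (by simp) (N * A, N * A') (by simp)).1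
  obtain ⟨hsum_pos, hprod_pos⟩ :=
    summable_and_tprod_eisR_posQuadrant hA hA' hN z v hnum hNnum
  obtain ⟨hsum_nonpos, hprod_nonpos⟩ :=
    summable_and_tprod_eisR_nonposQuadrant hA hA' hN z v hden hNden
  refine ⟨hsum_pos, hsum_nonpos, ?_⟩
  rw [hprod_pos, hprod_nonpos, ellGamma_eq_div, ellGamma_eq_div, ellGamma_eq_div, ellGamma_eq_div]
  ring

/-- Eisenstein's quotient of quotients: the products `Q₊₊` and `Q₋₋` of `R(λ',λ'')` over
`λ',λ'' ≥ 1` and over `λ',λ'' ≤ 0` converge absolutely, and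
`Q₊₊/Q₋₋ = [Γ(z−v,A,A')^N/Γ(−v,A,A')^N]·[Γ(−Nv,NA,NA')/Γ(Nz−Nv,NA,NA')]`. -/
theorem eisenstein_quotient_of_quotients (A A' : ℂ) (hA : 0 < A.im) (hA' : 0 < A'.im)
    (N : ℕ) (hN : 0 < N) (z v : ℂ)
    (hfac : ∀ p : ℤ × ℤ, (1 ≤ p.1 ∧ 1 ≤ p.2) ∨ (p.1 ≤ 0 ∧ p.2 ≤ 0) →
      (1 - e2 ((A * p.1 + A' * p.2 + v) - z)) ≠ 0 ∧
      (1 - e2 ((N : ℂ) * (A * p.1 + A' * p.2 + v))) ≠ 0 ∧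
      (1 - e2 (A * p.1 + A' * p.2 + v)) ≠ 0 ∧
      (1 - e2 ((N : ℂ) * ((A * p.1 + A' * p.2 + v) - z))) ≠ 0)
    (hΓ : ∀ j k : ℕ, ∀ w ∈ ({z - v, -v, (N : ℂ) * z - (N : ℂ) * v, -((N : ℂ) * v)} : Set ℂ),
      ∀ T ∈ ({(A, A'), ((N : ℂ) * A, (N : ℂ) * A')} : Set (ℂ × ℂ)),
      (1 - e2 ((j : ℂ) * T.1 + (k : ℂ) * T.2 + w)) ≠ 0 ∧
      (1 - e2 (((j : ℂ) + 1) * T.1 + ((k : ℂ) + 1) * T.2 - w)) ≠ 0) :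
    Summable (fun p : {p : ℤ × ℤ // 1 ≤ p.1 ∧ 1 ≤ p.2} =>
      ‖eisR A A' N z v p.1 - 1‖) ∧
    Summable (fun p : {p : ℤ × ℤ // p.1 ≤ 0 ∧ p.2 ≤ 0} =>
      ‖eisR A A' N z v p.1 - 1‖) ∧
    (∏' p : {p : ℤ × ℤ // 1 ≤ p.1 ∧ 1 ≤ p.2}, eisR A A' N z v p.1) /
        (∏' p : {p : ℤ × ℤ // p.1 ≤ 0 ∧ p.2 ≤ 0}, eisR A A' N z v p.1) =
      (ellGamma (z - v) A A' ^ N / ellGamma (-v) A A' ^ N) *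
        (ellGamma (-((N : ℂ) * v)) ((N : ℂ) * A) ((N : ℂ) * A') /
          ellGamma ((N : ℂ) * z - (N : ℂ) * v) ((N : ℂ) * A) ((N : ℂ) * A')) :=
  eisenstein_quotient_of_quotients_general A A' hA hA' N hN z v hΓ
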